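/- Let n ≥ 2 and let (T, J) be an ℕ^n-pair with L₀ ⊆ J, where L₀ = {a ∈ ℕ^n : some coordinate is 0}. Let a be the germ of T (the minimum of T \ {0} under the coordinatewise strict order). Then for every integer k ≥ 0, the set (ka + L_a) ∩ T contains at most one element, where L_a = ℕ^n \ (ℕ^n + a). -/

import Mathlib

/-!
Every nonzero element of `T` dominates the germ `a`, so an element of `L_a`, which does not
dominate `a`, has zero `T`-component: `L_a ⊆ J`. If `ka + ℓ` and `ka + ℓ'` both lie in `T`, then
`(ka + ℓ) + ℓ' = (ka + ℓ') + ℓ` are two decompositions in `T ⊕ J`, so they coincide.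
-/

open Pointwise

/-- Unique decompositions: every sum `a + b` with `a ∈ A`, `b ∈ B` determines `a` and `b`. -/
def UniqueSumsOn {α : Type*} [Add α] (A B : Set α) : Prop :=
  ∀ a ∈ A, ∀ b ∈ B, ∀ a' ∈ A, ∀ b' ∈ B, a + b = a' + b' → a = a' ∧ b = b'

/-- `C = A ⊕ B`: `C` is the direct sum of `A` and `B`. -/
def IsDirectSum {α : Type*} [Add α] (A B C : Set α) : Prop :=
  C = A + B ∧ UniqueSumsOn A B


/-- `L_a = ℕ^n \ (ℕ^n + a)`. -/
def La {n : ℕ} (a : Fin n → ℕ) : Set (Fin n → ℕ) :=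
  Set.univ \ {x | ∃ y : Fin n → ℕ, x = y + a}

theorem mem_La_iff {n : ℕ} {a ℓ : Fin n → ℕ} : ℓ ∈ La a ↔ ¬ a ≤ ℓ := by
  simp [La, le_iff_exists_add']

theorem La_subset_of_isDirectSum {n : ℕ} {T J : Set (Fin n → ℕ)}
    (h : IsDirectSum T J Set.univ) {a : Fin n → ℕ} (ha : ∀ b ∈ T, b ≠ 0 → a ≤ b) :
    La a ⊆ J := by
  intro ℓ hℓ
  obtain ⟨t, ht, j, hj, rfl⟩ : ℓ ∈ T + J := h.1 ▸ Set.mem_univ ℓ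
  obtain rfl | ht0 := eq_or_ne t 0
  · simpa using hj
  · exact absurd ((ha t ht ht0).trans le_self_add) (mem_La_iff.1 hℓ)

theorem subsingleton_translate_inter {α : Type*} [AddCommSemigroup α] {T J L : Set α}
    (h : UniqueSumsOn T J) (hL : L ⊆ J) (c : α) :
    Set.Subsingleton ({x | ∃ ℓ ∈ L, x = c + ℓ} ∩ T) := by
  rintro x ⟨⟨ℓ₁, hℓ₁, rfl⟩, hxT⟩ y ⟨⟨ℓ₂, hℓ₂, rfl⟩, hyT⟩
  refine (h _ hxT ℓ₂ (hL hℓ₂) _ hyT ℓ₁ (hL hℓ₁) ?_).1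
  simp only [add_right_comm]

theorem stmt9_general {n : ℕ} (T J : Set (Fin n → ℕ))
    (h : IsDirectSum T J Set.univ)
    (a : Fin n → ℕ)
    (hmin : ∀ b ∈ T, b ≠ 0 → b ≠ a → ∀ i, a i < b i) :
    ∀ k : ℕ, Set.Subsingleton ({x | ∃ ℓ ∈ La a, x = k • a + ℓ} ∩ T) := by
  have ha : ∀ b ∈ T, b ≠ 0 → a ≤ b := fun b hb hb0 => by
    obtain rfl | hba := eq_or_ne b a
    · exact le_rfl
    · exact fun i => (hmin b hb hb0 hba i).le
  exact fun k => subsingleton_translate_inter h.2 (La_subset_of_isDirectSum h ha) (k • a)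

theorem stmt9 {n : ℕ} (hn : 2 ≤ n) (T J : Set (Fin n → ℕ))
    (h : IsDirectSum T J Set.univ)
    (hL : {x : Fin n → ℕ | ∃ i, x i = 0} ⊆ J)
    (a : Fin n → ℕ) (haT : a ∈ T) (hapos : ∀ i, 0 < a i)
    (hmin : ∀ b ∈ T, b ≠ 0 → b ≠ a → ∀ i, a i < b i) :
    ∀ k : ℕ, Set.Subsingleton ({x | ∃ ℓ ∈ La a, x = k • a + ℓ} ∩ T) :=
  stmt9_general T J h a hmin
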